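/- If a convex function u : ℝⁿ → ℝ has a constant set {u = min u} containing a full line, then u is invariant under translations along that line, and consequently its Monge–Ampère measure is identically zero. -/

import Mathlib

open MeasureTheory

/-- The subgradient of a convex function `u` (relative to the domain `Ω`) at `x`. -/
def subgrad {n : ℕ} (u : EuclideanSpace ℝ (Fin n) → ℝ) (Ω : Set (EuclideanSpace ℝ (Fin n)))
    (x : EuclideanSpace ℝ (Fin n)) : Set (EuclideanSpace ℝ (Fin n)) :=
  {p | ∀ y ∈ Ω, u x + (inner ℝ p (y - x) : ℝ) ≤ u y}

/-- The subgradient image `∂u(s)` of a set `s`. -/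
def subgradImage {n : ℕ} (u : EuclideanSpace ℝ (Fin n) → ℝ) (Ω : Set (EuclideanSpace ℝ (Fin n)))
    (s : Set (EuclideanSpace ℝ (Fin n))) : Set (EuclideanSpace ℝ (Fin n)) :=
  ⋃ x ∈ s, subgrad u Ω x

/-!
A convex function that is bounded above on one line `p + ℝ d` is bounded above on every
parallel line `x + ℝ d`, since `x + t d` is the midpoint of `2x - p` and `p + 2t d`. A convex
function of one variable that is bounded above on a ray cannot increase along it, so `u` is
invariant under translation by `d`. A subgradient `q` at any point then satisfies
`t ⟪q, d⟫ ≤ 0` for all `t`, so `∂u` lies in the hyperplane `d^⊥`, which is Lebesgue-null.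
-/

section Convex

variable {E : Type*} [AddCommGroup E] [Module ℝ E] {u : E → ℝ}

theorem ConvexOn.bddAbove_line_of_bddAbove_line (hu : ConvexOn ℝ Set.univ u) {p d : E}
    (hp : BddAbove (Set.range fun t : ℝ => u (p + t • d))) (x : E) :
    BddAbove (Set.range fun t : ℝ => u (x + t • d)) := by
  obtain ⟨C, hC⟩ := hp
  refine ⟨(u ((2 : ℝ) • x - p) + C) / 2, ?_⟩
  rintro _ ⟨t, rfl⟩
  have hmid :
      (1 / 2 : ℝ) • ((2 : ℝ) • x - p) + (1 / 2 : ℝ) • (p + (2 * t) • d) = x + t • d := by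
    module
  have hconv := hu.2 (Set.mem_univ ((2 : ℝ) • x - p)) (Set.mem_univ (p + (2 * t) • d))
    (by norm_num : (0 : ℝ) ≤ 1 / 2) (by norm_num : (0 : ℝ) ≤ 1 / 2) (by norm_num)
  rw [hmid, smul_eq_mul, smul_eq_mul] at hconv
  have hCt : u (p + (2 * t) • d) ≤ C := hC ⟨2 * t, rfl⟩
  linarith

theorem ConvexOn.le_of_bddAbove_ray (hu : ConvexOn ℝ Set.univ u) {x v : E} {M : ℝ}
    (hM : ∀ s : ℝ, 0 ≤ s → u (x + s • v) ≤ M) : u (x + v) ≤ u x := by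
  have hbound : ∀ N : ℕ, 0 < N → u (x + v) ≤ u x + (M - u x) / N := by
    intro N hN
    have hN' : (0 : ℝ) < N := Nat.cast_pos.mpr hN
    have hsplit : (1 - (N : ℝ)⁻¹) • x + (N : ℝ)⁻¹ • (x + (N : ℝ) • v) = x + v := by
      rw [smul_add, smul_smul, inv_mul_cancel₀ hN'.ne', one_smul]
      module
    have hconv := hu.2 (Set.mem_univ x) (Set.mem_univ (x + (N : ℝ) • v))
      (sub_nonneg.mpr (inv_le_one_of_one_le₀ (Nat.one_le_cast.mpr hN))) (inv_nonneg.mpr hN'.le)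
      (by ring)
    rw [hsplit, smul_eq_mul, smul_eq_mul] at hconv
    have hMN := mul_le_mul_of_nonneg_left (hM N hN'.le) (inv_nonneg.mpr hN'.le)
    calc u (x + v) ≤ (1 - (N : ℝ)⁻¹) * u x + (N : ℝ)⁻¹ * M := by linarith
      _ = u x + (M - u x) / N := by ring
  have hlim : Filter.Tendsto (fun N : ℕ => u x + (M - u x) / N) Filter.atTop (nhds (u x)) := by
    simpa using tendsto_const_nhds.add (tendsto_const_div_atTop_nhds_zero_nat (M - u x))
  exact ge_of_tendsto hlim (Filter.eventually_atTop.mpr ⟨1, fun N hN => hbound N hN⟩)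

theorem ConvexOn.map_add_smul_eq_of_bddAbove_line (hu : ConvexOn ℝ Set.univ u) {p d : E}
    (hp : BddAbove (Set.range fun t : ℝ => u (p + t • d))) (x : E) (t : ℝ) :
    u (x + t • d) = u x := by
  have hle : ∀ y : E, ∀ s : ℝ, u (y + s • d) ≤ u y := by
    intro y s
    obtain ⟨M, hM⟩ := hu.bddAbove_line_of_bddAbove_line hp y
    exact hu.le_of_bddAbove_ray fun r _ => hM ⟨r * s, by simp only [mul_smul]⟩
  refine le_antisymm (hle x t) ?_
  simpa using hle (x + t • d) (-t)

end Convex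

section Subgradient

variable {n : ℕ} {u : EuclideanSpace ℝ (Fin n) → ℝ} {d : EuclideanSpace ℝ (Fin n)}

theorem inner_eq_zero_of_mem_subgrad (hinv : ∀ x (t : ℝ), u (x + t • d) = u x)
    {x q : EuclideanSpace ℝ (Fin n)} (hq : q ∈ subgrad u Set.univ x) : inner ℝ q d = 0 := by
  have hneg : ∀ t : ℝ, t * inner ℝ q d ≤ 0 := by
    intro t
    have h := hq (x + t • d) (Set.mem_univ _)
    rw [hinv x t, add_sub_cancel_left, real_inner_smul_right] at h
    linarith
  linarith [hneg 1, hneg (-1)]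

theorem subgradImage_subset_orthogonal (hinv : ∀ x (t : ℝ), u (x + t • d) = u x)
    (s : Set (EuclideanSpace ℝ (Fin n))) :
    subgradImage u Set.univ s ⊆ (ℝ ∙ d)ᗮ := by
  intro q hq
  simp only [subgradImage, Set.mem_iUnion] at hq
  obtain ⟨x, _, hxq⟩ := hq
  exact Submodule.mem_orthogonal_singleton_iff_inner_left.mpr
    (inner_eq_zero_of_mem_subgrad hinv hxq)

end Subgradient

theorem volume_orthogonal_span_singleton {n : ℕ} {d : EuclideanSpace ℝ (Fin n)} (hd : d ≠ 0) :
    volume ((ℝ ∙ d)ᗮ : Set (EuclideanSpace ℝ (Fin n))) = 0 :=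
  Measure.addHaar_submodule volume _ <| by
    rwa [Ne, Submodule.orthogonal_eq_top_iff, Submodule.span_singleton_eq_bot]

theorem stmt_6_general (n : ℕ) (u : EuclideanSpace ℝ (Fin n) → ℝ)
    (hconv : ConvexOn ℝ Set.univ u)
    (p d : EuclideanSpace ℝ (Fin n)) (hd : d ≠ 0)
    (hline : ∀ t : ℝ, u (p + t • d) = u p) :
    (∀ (x : EuclideanSpace ℝ (Fin n)) (t : ℝ), u (x + t • d) = u x) ∧
      ∀ E : Set (EuclideanSpace ℝ (Fin n)), volume (subgradImage u Set.univ E) = 0 := by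
  have hbdd : BddAbove (Set.range fun t : ℝ => u (p + t • d)) :=
    ⟨u p, by rintro _ ⟨t, rfl⟩; exact (hline t).le⟩
  have hinv := hconv.map_add_smul_eq_of_bddAbove_line hbdd
  refine ⟨hinv, fun E => ?_⟩
  exact measure_mono_null (subgradImage_subset_orthogonal hinv E)
    (volume_orthogonal_span_singleton hd)

theorem stmt_6 (n : ℕ) (u : EuclideanSpace ℝ (Fin n) → ℝ)
    (hconv : ConvexOn ℝ Set.univ u)
    (p d : EuclideanSpace ℝ (Fin n)) (hd : d ≠ 0)
    (hmin : ∀ x, u p ≤ u x)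
    (hline : ∀ t : ℝ, u (p + t • d) = u p) :
    (∀ (x : EuclideanSpace ℝ (Fin n)) (t : ℝ), u (x + t • d) = u x) ∧
      ∀ E : Set (EuclideanSpace ℝ (Fin n)), volume (subgradImage u Set.univ E) = 0 :=
  stmt_6_general n u hconv p d hd hline
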